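/- An element x of the group ring ℤ[ℚ/ℤ] is fixed by every automorphism of ℚ/ℤ (acting on basis elements by e(γ) ↦ e(g(γ)) for g ∈ Aut(ℚ/ℤ)) if and only if x lies in the ℤ-linear span of the elements ρ(n) = Σ_{γ of exact additive order n} e(γ), n ≥ 1; in other words, the elements ρ(n) generate the invariant part ℤ[ℚ/ℤ]^G of the group ring under the action of G = Aut(ℚ/ℤ). -/

import Mathlib

open scoped Classical

/-- `ℚ/ℤ`, the quotient of the additive group of rationals by the integers. -/
abbrev QZ : Type := ℚ ⧸ AddSubgroup.zmultiples (1 : ℚ)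

/-- The group ring `ℤ[ℚ/ℤ]`. -/
abbrev RQZ : Type := AddMonoidAlgebra ℤ QZ

/-- The basis element `e(γ)` of the group ring `ℤ[ℚ/ℤ]`. -/
noncomputable def e (γ : QZ) : RQZ := AddMonoidAlgebra.single γ 1

/-- `τ(C(n)) = ∑_{n • γ = 0} e(γ)`, the sum of basis elements over the `n`-torsion. -/
noncomputable def tauC (n : ℕ) : RQZ := ∑ᶠ γ ∈ {γ : QZ | n • γ = 0}, e γ

/-- `ρ(d) = ∑_{γ of exact additive order d} e(γ)`. -/
noncomputable def rhoE (d : ℕ) : RQZ := ∑ᶠ γ ∈ {γ : QZ | addOrderOf γ = d}, e γ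

/-!
Automorphisms of `ℚ/ℤ` preserve additive order, so every `ρ(n)` is invariant. Conversely,
`Aut(ℚ/ℤ)` is transitive on the elements of order `n`: two of them differ by a multiplier `c`
prime to `n`, and `c` lifts to a sequence `w j` of units modulo `n * j!` that are compatible
under reduction (an element of `ℤ̂ˣ`), which acts on every torsion group by an automorphism that
is multiplication by `c` on the `n`-torsion. Hence the coefficients of an invariant element depend
only on the order of the basis element, which is to say that it is a combination of the `ρ(n)`.
-/

theorem Int.exists_isCoprime_modEq {m M : ℕ} (hM : M ≠ 0) (hmM : m ∣ M) {a : ℤ}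
    (ha : IsCoprime a m) : ∃ b : ℤ, IsCoprime b M ∧ b ≡ a [ZMOD m] := by
  have : NeZero M := ⟨hM⟩
  have hunit : IsUnit (a : ZMod m) := (ZMod.coe_int_isUnit_iff_isCoprime a m).2 ha.symm
  obtain ⟨v, hv⟩ := ZMod.unitsMap_surjective hmM hunit.unit
  refine ⟨((v : ZMod M).val : ℤ), ?_, ?_⟩
  · rw [isCoprime_comm, ← ZMod.coe_int_isUnit_iff_isCoprime]
    simp
  · rw [← ZMod.intCast_eq_intCast_iff, ← ZMod.cast_intCast hmM]
    simpa [ZMod.unitsMap_val] using congrArg Units.val hv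

theorem exists_isCoprime_modEq_chain {m : ℕ → ℕ} (hm₀ : ∀ j, m j ≠ 0)
    (hm : ∀ j, m j ∣ m (j + 1)) {a : ℤ} (ha : IsCoprime a (m 0)) :
    ∃ w : ℕ → ℤ, w 0 = a ∧ ∀ j, IsCoprime (w j) (m j) ∧ w (j + 1) ≡ w j [ZMOD m j] := by
  choose lift hlift using fun j (b : {b : ℤ // IsCoprime b (m j)}) ↦
    Int.exists_isCoprime_modEq (hm₀ (j + 1)) (hm j) b.2
  let W : ∀ j, {b : ℤ // IsCoprime b (m j)} :=
    fun j ↦ Nat.rec ⟨a, ha⟩ (fun j b ↦ ⟨lift j b, (hlift j b).1⟩) j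
  exact ⟨fun j ↦ (W j).1, rfl, fun j ↦ ⟨(W j).2, (hlift j (W j)).2⟩⟩

section TorsionGroup

variable {A : Type*} [AddCommGroup A]

theorem zsmul_eq_zsmul_of_modEq {m : ℕ} {a b : ℤ} {γ : A} (hγ : m • γ = 0)
    (hab : a ≡ b [ZMOD m]) : a • γ = b • γ :=
  zsmul_eq_zsmul_iff_modEq.2 <| hab.of_dvd <| Int.natCast_dvd_natCast.2 <|
    addOrderOf_dvd_of_nsmul_eq_zero hγ

theorem IsCoprime.exists_zsmul_zsmul_eq_self {a : ℤ} {m : ℕ} (h : IsCoprime a m) :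
    ∃ u : ℤ, IsCoprime u m ∧ ∀ γ : A, m • γ = 0 → u • a • γ = γ := by
  obtain ⟨u, v, huv⟩ := h
  refine ⟨u, ⟨a, v, by linarith⟩, fun γ hγ ↦ ?_⟩
  rw [smul_smul]
  exact (zsmul_eq_zsmul_of_modEq hγ (Int.modEq_iff_dvd.2 ⟨v, by linarith⟩)).trans (one_zsmul γ)

section Chain

variable {m : ℕ → ℕ} {w : ℕ → ℤ}

theorem nsmul_eq_zero_of_chain (hm : ∀ j, m j ∣ m (j + 1)) {i j : ℕ} (hij : i ≤ j) {γ : A}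
    (hγ : m i • γ = 0) : m j • γ = 0 := by
  obtain ⟨k, hk⟩ := Nat.rel_of_forall_rel_succ_of_le (· ∣ ·) hm hij
  rw [hk, mul_nsmul, hγ, smul_zero]

theorem zsmul_eq_zsmul_of_chain (hm : ∀ j, m j ∣ m (j + 1))
    (hw : ∀ j, w (j + 1) ≡ w j [ZMOD m j]) {i j : ℕ} (hij : i ≤ j) {γ : A}
    (hγ : m i • γ = 0) : w j • γ = w i • γ := by
  induction j, hij using Nat.le_induction with
  | base => rfl
  | succ j hij ih =>
    rw [← ih, zsmul_eq_zsmul_of_modEq (nsmul_eq_zero_of_chain hm hij hγ) (hw j)]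

theorem exists_addEquiv_eq_zsmul_of_chain (hm : ∀ j, m j ∣ m (j + 1))
    (hA : ∀ γ : A, ∃ j, m j • γ = 0) (hcop : ∀ j, IsCoprime (w j) (m j))
    (hw : ∀ j, w (j + 1) ≡ w j [ZMOD m j]) :
    ∃ g : A ≃+ A, ∀ j γ, m j • γ = 0 → g γ = w j • γ := by
  let f (γ : A) : A := w (Nat.find (hA γ)) • γ
  have hf : ∀ j γ, m j • γ = 0 → f γ = w j • γ := fun j γ hγ ↦
    (zsmul_eq_zsmul_of_chain hm hw (Nat.find_min' _ hγ) (Nat.find_spec (hA γ))).symm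
  have hadd : ∀ a b, f (a + b) = f a + f b := by
    intro a b
    obtain ⟨i, hi⟩ := hA a
    obtain ⟨j, hj⟩ := hA b
    have ha := nsmul_eq_zero_of_chain hm (le_max_left i j) hi
    have hb := nsmul_eq_zero_of_chain hm (le_max_right i j) hj
    rw [hf _ _ ha, hf _ _ hb, hf _ _ (by rw [smul_add, ha, hb, add_zero]), smul_add]
  let F : A →+ A := AddMonoidHom.mk' f hadd
  have hbij : Function.Bijective F := by
    refine ⟨(injective_iff_map_eq_zero F).2 fun γ hγ ↦ ?_, fun δ ↦ ?_⟩
    · obtain ⟨j, hj⟩ := hA γ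
      obtain ⟨u, -, hu⟩ := (hcop j).exists_zsmul_zsmul_eq_self (A := A)
      rw [← hu γ hj, ← hf j γ hj]
      exact (congrArg (u • ·) hγ).trans (smul_zero u)
    · obtain ⟨j, hj⟩ := hA δ
      obtain ⟨u, -, hu⟩ := (hcop j).exists_zsmul_zsmul_eq_self (A := A)
      have huδ : m j • u • δ = 0 := by rw [smul_comm, hj, smul_zero]
      exact ⟨u • δ, (hf j _ huδ).trans (by rw [smul_comm, hu δ hj])⟩
  exact ⟨AddEquiv.ofBijective F hbij, hf⟩

end Chain

theorem IsAddTorsion.exists_addEquiv_eq_zsmul (hA : IsAddTorsion A) {n : ℕ} (hn : n ≠ 0)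
    {c : ℤ} (hc : IsCoprime c n) : ∃ g : A ≃+ A, ∀ γ, n • γ = 0 → g γ = c • γ := by
  have hdvd (j : ℕ) : n * j.factorial ∣ n * (j + 1).factorial :=
    mul_dvd_mul_left n (Nat.factorial_dvd_factorial j.le_succ)
  obtain ⟨w, rfl, hw⟩ := exists_isCoprime_modEq_chain (m := fun j : ℕ ↦ n * j.factorial)
    (fun j ↦ by positivity) hdvd (by simpa using hc)
  have hkill (γ : A) : ∃ j : ℕ, (n * j.factorial) • γ = 0 :=
    ⟨addOrderOf γ, addOrderOf_dvd_iff_nsmul_eq_zero.1 <|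
      (Nat.dvd_factorial (hA γ).addOrderOf_pos le_rfl).mul_left n⟩
  obtain ⟨g, hg⟩ := exists_addEquiv_eq_zsmul_of_chain hdvd hkill (fun j ↦ (hw j).1)
    (fun j ↦ (hw j).2)
  exact ⟨g, fun γ hγ ↦ hg 0 γ (by simpa using hγ)⟩

end TorsionGroup

theorem AddEquiv.image_setOf_addOrderOf_eq {A : Type*} [AddMonoid A] (g : A ≃+ A) (n : ℕ) :
    g '' {γ | addOrderOf γ = n} = {γ | addOrderOf γ = n} := by
  ext δ
  exact ⟨fun ⟨γ, hγ, hδ⟩ ↦ hδ ▸ (g.addOrderOf_eq γ).trans hγ,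
    fun h ↦ ⟨g.symm δ, (g.symm.addOrderOf_eq δ).trans h, g.apply_symm_apply δ⟩⟩

theorem AddMonoidAlgebra.coeff_apply_eq_of_mapDomainLinearEquiv_eq {R M : Type*} [Semiring R]
    {σ : M ≃ M} {x : AddMonoidAlgebra R M} (hx : mapDomainLinearEquiv R R σ x = x) (m : M) :
    x.coeff (σ m) = x.coeff m := by
  simpa using congr(($hx).coeff (σ m)).symm

theorem QZ.isAddTorsion : IsAddTorsion QZ := by
  intro γ
  induction γ using QuotientAddGroup.induction_on with
  | H q =>
    have hq : addOrderOf (q : QZ) = q.den := by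
      simpa using AddCircle.addOrderOf_coe_rat (p := (1 : ℚ)) (q := q)
    exact addOrderOf_pos_iff.1 (hq ▸ q.pos)

theorem QZ.exists_isCoprime_zsmul_eq {γ δ : QZ} (h : addOrderOf γ = addOrderOf δ) :
    ∃ c : ℤ, IsCoprime c (addOrderOf γ) ∧ c • γ = δ := by
  obtain ⟨a, ha, -, hγ⟩ := AddCircle.exists_gcd_eq_one_of_isOfFinAddOrder (QZ.isAddTorsion γ)
  obtain ⟨b, hb, -, hδ⟩ := AddCircle.exists_gcd_eq_one_of_isOfFinAddOrder (QZ.isAddTorsion δ)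
  set n := addOrderOf γ
  rw [← h] at hb hδ
  -- `γ = a • μ` and `δ = b • μ` for the generator `μ = 1 / n` of the `n`-torsion
  set μ : AddCircle (1 : ℚ) := ↑((1 : ℚ) / n)
  have hμ : n • μ = 0 := by
    have hμn : addOrderOf μ = n :=
      AddCircle.addOrderOf_period_div (QZ.isAddTorsion γ).addOrderOf_pos
    exact hμn ▸ addOrderOf_nsmul_eq_zero μ
  rw [AddCircle.natCast_div_mul_eq_nsmul] at hγ hδ
  obtain ⟨u, hu, hua⟩ :=
    (Nat.isCoprime_iff_coprime.2 ha).exists_zsmul_zsmul_eq_self (A := QZ)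
  refine ⟨b * u, (Nat.isCoprime_iff_coprime.2 hb).mul_left hu, ?_⟩
  rw [← hγ, ← hδ, ← natCast_zsmul, mul_smul, hua μ hμ, natCast_zsmul]

theorem QZ.exists_addEquiv_apply_eq {γ δ : QZ} (h : addOrderOf γ = addOrderOf δ) :
    ∃ g : QZ ≃+ QZ, g γ = δ := by
  obtain ⟨c, hc, rfl⟩ := QZ.exists_isCoprime_zsmul_eq h
  obtain ⟨g, hg⟩ := QZ.isAddTorsion.exists_addEquiv_eq_zsmul
    (QZ.isAddTorsion γ).addOrderOf_pos.ne' hc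
  exact ⟨g, hg γ (addOrderOf_nsmul_eq_zero γ)⟩

theorem QZ.finite_setOf_addOrderOf_eq (n : ℕ) : {γ : QZ | addOrderOf γ = n}.Finite := by
  rcases n.eq_zero_or_pos with rfl | hn
  · simp [(QZ.isAddTorsion _).addOrderOf_pos.ne']
  · exact AddCircle.finite_setOfPred_addOrderOf_eq 1 hn

theorem rhoE_eq_sum (n : ℕ) : rhoE n = ∑ γ ∈ (QZ.finite_setOf_addOrderOf_eq n).toFinset, e γ :=
  finsum_mem_eq_finite_toFinset_sum _ _

theorem coeff_rhoE (n : ℕ) (δ : QZ) : (rhoE n).coeff δ = if addOrderOf δ = n then 1 else 0 := by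
  rw [rhoE_eq_sum, AddMonoidAlgebra.coeff_sum, Finsupp.finsetSum_apply]
  simp [e, AddMonoidAlgebra.coeff_single, Finsupp.single_apply]

theorem map_rhoE {g : QZ ≃+ QZ} {T : RQZ →ₗ[ℤ] RQZ} (hT : ∀ γ, T (e γ) = e (g γ)) (n : ℕ) :
    T (rhoE n) = rhoE n := by
  calc T (rhoE n) = ∑ᶠ γ ∈ {γ : QZ | addOrderOf γ = n}, e (g γ) := by
        rw [rhoE]
        exact (T.toAddMonoidHom.map_finsum_mem _ (QZ.finite_setOf_addOrderOf_eq n)).trans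
          (by simp [hT])
    _ = ∑ᶠ δ ∈ g '' {γ : QZ | addOrderOf γ = n}, e δ := (finsum_mem_image g.injective.injOn).symm
    _ = rhoE n := by rw [g.image_setOf_addOrderOf_eq, rhoE]

theorem mem_span_rhoE_of_factorsThrough {x : RQZ}
    (hx : Function.FactorsThrough x.coeff addOrderOf) :
    x ∈ Submodule.span ℤ {y : RQZ | ∃ n : ℕ, 0 < n ∧ y = rhoE n} := by
  set c := Function.extend addOrderOf x.coeff 0
  have hc (γ : QZ) : c (addOrderOf γ) = x.coeff γ := hx.extend_apply 0 γ
  have hsum : x = ∑ n ∈ x.coeff.support.image addOrderOf, c n • rhoE n := by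
    ext δ
    simp only [AddMonoidAlgebra.coeff_sum, Finsupp.finsetSum_apply,
      AddMonoidAlgebra.coeff_smul_apply, coeff_rhoE, smul_eq_mul, mul_ite, mul_one, mul_zero,
      Finset.sum_ite_eq]
    split_ifs with hδ
    · exact (hc δ).symm
    · exact Finsupp.notMem_support_iff.1 fun h ↦ hδ (Finset.mem_image_of_mem _ h)
  rw [hsum]
  refine Submodule.sum_mem _ fun n hn ↦ Submodule.smul_mem _ _ (Submodule.subset_span ?_)
  obtain ⟨γ, -, rfl⟩ := Finset.mem_image.1 hn
  exact ⟨_, (QZ.isAddTorsion γ).addOrderOf_pos, rfl⟩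

/-- An element of `ℤ[ℚ/ℤ]` is fixed by every automorphism of `ℚ/ℤ`
(acting on basis elements by `e γ ↦ e (g γ)`) if and only if it lies in the
ℤ-linear span of the elements `ρ(n)`, `n ≥ 1`. -/
theorem fixed_iff_span_rho (x : RQZ) :
    (∀ (g : QZ ≃+ QZ) (T : RQZ →ₗ[ℤ] RQZ),
        (∀ γ : QZ, T (e γ) = e (g γ)) → T x = x) ↔
      x ∈ Submodule.span ℤ {y : RQZ | ∃ n : ℕ, 0 < n ∧ y = rhoE n} := by
  constructor
  · intro hx
    refine mem_span_rhoE_of_factorsThrough fun γ δ hγδ ↦ ?_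
    obtain ⟨g, rfl⟩ := QZ.exists_addEquiv_apply_eq hγδ
    have hg := hx g (AddMonoidAlgebra.mapDomainLinearEquiv ℤ ℤ g.toEquiv : RQZ →ₗ[ℤ] RQZ)
      fun γ ↦ AddMonoidAlgebra.mapDomainLinearEquiv_single _ _ _
    exact (AddMonoidAlgebra.coeff_apply_eq_of_mapDomainLinearEquiv_eq hg γ).symm
  · intro hx g T hT
    refine (Submodule.span_le (p := LinearMap.eqLocus T LinearMap.id)).2 ?_ hx
    rintro _ ⟨n, -, rfl⟩
    exact map_rhoE hT n
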